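/- Let D be a finite multiset of dominoes in ℝ^n with sum v, let I = {i_1 < … < i_k} ⊆ {1, …, n}, and let (d^(1), …, d^(k)) be an I-alternating domino sequence for v with respect to D. Then for every j′ ∈ {1, …, k} and every subset J ⊆ {1, …, k} ∖ {j′}, the coordinate of v − Σ_{j∈J} d^(j) at position i_{j′} is nonzero and has the same sign as the domino d^(j′). -/
import Mathlib


/-- `d` is an `i`-domino (0-based indices). -/
def IsDominoAt {n : ℕ} (i : Fin n) (d : Fin n → ℝ) : Prop :=
  if h : (i : ℕ) + 1 < n then
    0 < d i * d ⟨(i : ℕ) + 1, h⟩ ∧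
      ∀ j : Fin n, (j : ℕ) ≠ (i : ℕ) → (j : ℕ) ≠ (i : ℕ) + 1 → d j = 0
  else
    d i ≠ 0 ∧ ∀ j : Fin n, j ≠ i → d j = 0

/-- A nonzero domino. -/
def IsDomino {n : ℕ} (d : Fin n → ℝ) : Prop := ∃ i : Fin n, IsDominoAt i d

def NonnegVec {n : ℕ} (d : Fin n → ℝ) : Prop := ∀ j, 0 ≤ d j

def NonposVec {n : ℕ} (d : Fin n → ℝ) : Prop := ∀ j, d j ≤ 0

/-- Two dominoes have opposite signs. -/
def OppSign {n : ℕ} (d e : Fin n → ℝ) : Prop :=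
  (NonnegVec d ∧ NonposVec e) ∨ (NonposVec d ∧ NonnegVec e)

/-- `L` is an `I`-alternating domino sequence for `v` with respect to `D`. -/
def IsAltDominoSeq {n : ℕ} (D : Multiset (Fin n → ℝ)) (v : Fin n → ℝ)
    (I : Finset (Fin n)) (L : List (Fin n → ℝ)) : Prop :=
  L.length = I.card ∧
  (↑L : Multiset (Fin n → ℝ)) ≤ D ∧
  (∀ d ∈ L, IsDomino d) ∧
  (∀ (j : ℕ) (hj : j < L.length) (hj' : j < I.card),
    0 < v (I.orderEmbOfFin rfl ⟨j, hj'⟩) *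
        L.get ⟨j, hj⟩ (I.orderEmbOfFin rfl ⟨j, hj'⟩)) ∧
  (∀ (j : ℕ) (h1 : j < L.length) (h2 : j + 1 < L.length),
    OppSign (L.get ⟨j, h1⟩) (L.get ⟨j + 1, h2⟩))

/-- The support of a domino at `m` lies in `{m, m+1}`. -/
lemma domino_support_aux {n : ℕ} (m : Fin n) (d : Fin n → ℝ) (h : IsDominoAt m d)
    (a : Fin n) (ha : d a ≠ 0) : (a : ℕ) = (m : ℕ) ∨ (a : ℕ) = (m : ℕ) + 1 := by
  unfold IsDominoAt at h
  split_ifs at h with hm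
  · by_contra hc
    push_neg at hc
    exact ha (h.2 a hc.1 hc.2)
  · by_contra hc
    push_neg at hc
    exact ha (h.2 a (fun he => hc.1 (congrArg Fin.val he)))

/-- Two nonzero coordinates of a domino are within distance 1. -/
lemma domino_close_aux {n : ℕ} (d : Fin n → ℝ) (h : IsDomino d)
    (a b : Fin n) (ha : d a ≠ 0) (hb : d b ≠ 0) :
    (a : ℕ) ≤ (b : ℕ) + 1 ∧ (b : ℕ) ≤ (a : ℕ) + 1 := by
  obtain ⟨m, hm⟩ := h
  rcases domino_support_aux m d hm a ha with h1 | h1 <;>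
    rcases domino_support_aux m d hm b hb with h2 | h2 <;> omega

/-- Lemma 10.4: if `(d^(1), …, d^(k))` is an `I`-alternating domino sequence for
`v`, then for any `j'` and any `J ⊆ {1, …, k} \ {j'}`, the vector
`v - ∑_{j ∈ J} d^(j)` is nonzero at the `j'`-th element of `I`, with the same sign
as the domino `d^(j')` there. -/
theorem delete_from_alternating_sum (n : ℕ) (D : Multiset (Fin n → ℝ))
    (hD : ∀ d ∈ D, d = 0 ∨ IsDomino d)
    (v : Fin n → ℝ) (hv : v = D.sum) (I : Finset (Fin n))
    (L : List (Fin n → ℝ)) (hL : IsAltDominoSeq D v I L)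
    (j' : Fin L.length) (J : Finset (Fin L.length)) (hJ : j' ∉ J) :
    ∀ hj' : (j' : ℕ) < I.card,
      0 < (v - ∑ j ∈ J, L.get j) (I.orderEmbOfFin rfl ⟨(j' : ℕ), hj'⟩) *
          L.get j' (I.orderEmbOfFin rfl ⟨(j' : ℕ), hj'⟩) := by
  intro hj'
  obtain ⟨hlen, hsub, hdom, hpos, halt⟩ := hL
  set f := I.orderEmbOfFin rfl with hf
  have hmono : StrictMono f := OrderEmbedding.strictMono f
  have hcard : ∀ t : Fin L.length, (t : ℕ) < I.card := fun t => hlen ▸ t.isLt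
  set g : Fin L.length → Fin n := fun t => f ⟨t, hcard t⟩ with hgdef
  have hgmono : ∀ a b : Fin L.length, a < b → (g a : ℕ) < (g b : ℕ) := by
    intro a b hab
    exact hmono (show (⟨a, hcard a⟩ : Fin I.card) < ⟨b, hcard b⟩ from hab)
  set i : Fin n := g j' with hi
  have hposj' : 0 < v i * L.get j' i := by
    have := hpos j' j'.isLt (hcard j')
    simpa [hi, hgdef] using this
  -- each term of the sum has sign opposite to L.get j' at i
  have hterm : ∀ j ∈ J, L.get j i * L.get j' i ≤ 0 := by
    intro j hjJ
    by_cases hz : L.get j i = 0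
    · simp [hz]
    have hne : j ≠ j' := fun h => hJ (h ▸ hjJ)
    have hposj : 0 < v (g j) * L.get j (g j) := by
      have := hpos j j.isLt (hcard j)
      simpa [hgdef] using this
    have hnz : L.get j (g j) ≠ 0 := by
      intro h0
      rw [h0, mul_zero] at hposj
      exact lt_irrefl 0 hposj
    have hdomj : IsDomino (L.get j) := hdom _ (by simpa using L.get_mem j j.isLt)
    have hclose := domino_close_aux (L.get j) hdomj (g j) i hnz hz
    -- conclude |j - j'| = 1
    have hadj : (j : ℕ) + 1 = (j' : ℕ) ∨ (j' : ℕ) + 1 = (j : ℕ) := by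
      by_contra hc
      push_neg at hc
      have hvne : (j : ℕ) ≠ (j' : ℕ) := fun h => hne (Fin.ext h)
      rcases lt_or_gt_of_ne hvne with hlt | hgt
      · have h2 : (j : ℕ) + 2 ≤ (j' : ℕ) := by omega
        set mid : Fin L.length := ⟨(j : ℕ) + 1, by omega⟩ with hmid
        have h3 := hgmono j mid (by simp [hmid, Fin.lt_def])
        have h4 := hgmono mid j' (by simp [hmid, Fin.lt_def]; omega)
        omega
      · have h2 : (j' : ℕ) + 2 ≤ (j : ℕ) := by omega
        set mid : Fin L.length := ⟨(j' : ℕ) + 1, by omega⟩ with hmid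
        have h3 := hgmono j' mid (by simp [hmid, Fin.lt_def])
        have h4 := hgmono mid j (by simp [hmid, Fin.lt_def]; omega)
        omega
    have hopp : OppSign (L.get j) (L.get j') ∨ OppSign (L.get j') (L.get j) := by
      rcases hadj with h | h
      · left
        have := halt (j : ℕ) j.isLt (by omega)
        have e1 : (⟨(j : ℕ), j.isLt⟩ : Fin L.length) = j := Fin.ext rfl
        have e2 : (⟨(j : ℕ) + 1, by omega⟩ : Fin L.length) = j' := Fin.ext h
        rwa [e1, e2] at this
      · right
        have := halt (j' : ℕ) j'.isLt (by omega)
        have e1 : (⟨(j' : ℕ), j'.isLt⟩ : Fin L.length) = j' := Fin.ext rfl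
        have e2 : (⟨(j' : ℕ) + 1, by omega⟩ : Fin L.length) = j := Fin.ext h
        rwa [e1, e2] at this
    rcases hopp with (⟨h1, h2⟩ | ⟨h1, h2⟩) | (⟨h1, h2⟩ | ⟨h1, h2⟩)
    · exact mul_nonpos_of_nonneg_of_nonpos (h1 i) (h2 i)
    · exact mul_nonpos_of_nonpos_of_nonneg (h1 i) (h2 i)
    · exact mul_nonpos_of_nonpos_of_nonneg (h2 i) (h1 i)
    · exact mul_nonpos_of_nonneg_of_nonpos (h2 i) (h1 i)
  have hsum : ∑ j ∈ J, L.get j i * L.get j' i ≤ 0 := Finset.sum_nonpos hterm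
  have heval : (v - ∑ j ∈ J, L.get j) i = v i - ∑ j ∈ J, L.get j i := by
    simp [Finset.sum_apply]
  calc (0 : ℝ) < v i * L.get j' i - ∑ j ∈ J, L.get j i * L.get j' i := by linarith
    _ = (v - ∑ j ∈ J, L.get j) i * L.get j' i := by
        rw [heval, sub_mul, Finset.sum_mul]
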